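/- arXiv:1112.4788 — 4 statements merged into one kernel-verified Lean document; each statement's English description precedes it below -/
import Mathlib

section
/- Let n ≥ 3 and let f : 2^{[n]} → ℝ be a polymatroid (nonnegative with f(∅)=0, monotone, submodular). Then for every i ∈ [n] (indices taken modulo n), the cycle inequality holds: f({i,i+1}) + Σ_{j ≠ i, i+1} f({j}) ≤ Σ_{j ≠ i} f({j,j+1}), where the sums range over j ∈ [n] with indices mod n. -/
/-!
Submodularity applied to `{a, b}` and `{b, c}`, together with monotonicity, gives the triangle
inequality `f {a, c} + f {b} ≤ f {a, b} + f {b, c}`. Chaining it along the path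
`i + 1, i + 2, …, i + n = i` replaces the edges of the path one at a time by the chord `{i + 1, i}`,
leaving behind the singletons of the interior vertices, which are exactly the `j ∉ {i, i + 1}`.
-/

open Finset Fin.NatCast

section Submodular

variable {α β : Type*} [DecidableEq α] [AddCommMonoid β] [PartialOrder β] [IsOrderedAddMonoid β]
  {f : Finset α → β}

theorem pair_add_singleton_le_pair_add_pair (hmono : Monotone f)
    (hsub : ∀ S T, f (S ∩ T) + f (S ∪ T) ≤ f S + f T) (a b c : α) :
    f {a, c} + f {b} ≤ f {a, b} + f {b, c} :=
  calc f {a, c} + f {b} ≤ f ({a, b} ∪ {b, c}) + f ({a, b} ∩ {b, c}) :=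
        add_le_add (hmono fun x ↦ by simp only [mem_union, mem_insert, mem_singleton]; tauto)
          (hmono (by simp))
    _ = f ({a, b} ∩ {b, c}) + f ({a, b} ∪ {b, c}) := add_comm _ _
    _ ≤ f {a, b} + f {b, c} := hsub _ _

theorem pair_add_sum_singleton_le_sum_pair (hmono : Monotone f)
    (hsub : ∀ S T, f (S ∩ T) + f (S ∪ T) ≤ f S + f T) (v : ℕ → α) {m : ℕ} (hm : 1 ≤ m) :
    f {v 0, v m} + ∑ k ∈ Ico 1 m, f {v k} ≤ ∑ k ∈ range m, f {v k, v (k + 1)} := by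
  induction m, hm using Nat.le_induction with
  | base => simp
  | succ m hm ih =>
    rw [sum_Ico_succ_top hm, sum_range_succ]
    calc f {v 0, v (m + 1)} + (∑ k ∈ Ico 1 m, f {v k} + f {v m})
        = (f {v 0, v (m + 1)} + f {v m}) + ∑ k ∈ Ico 1 m, f {v k} := by abel
      _ ≤ (f {v 0, v m} + f {v m, v (m + 1)}) + ∑ k ∈ Ico 1 m, f {v k} :=
        add_le_add_left (pair_add_singleton_le_pair_add_pair hmono hsub _ _ _) _
      _ = (f {v 0, v m} + ∑ k ∈ Ico 1 m, f {v k}) + f {v m, v (m + 1)} := by abel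
      _ ≤ _ := add_le_add_left ih _

end Submodular

section CyclicShift

variable {M : Type*} [AddCancelCommMonoid M] {m : ℕ}

theorem Fin.add_one_add_last (i : Fin (m + 1)) : i + 1 + Fin.last m = i := by
  rw [add_assoc, add_comm 1, Fin.last_add_one, add_zero]

theorem sum_erase_eq_sum_range_add_one_add (g : Fin (m + 1) → M) (i : Fin (m + 1)) :
    ∑ j ∈ univ.erase i, g j = ∑ k ∈ range m, g (i + 1 + k) := by
  apply add_left_cancel (a := g i)
  rw [add_sum_erase _ _ (mem_univ i), ← Equiv.sum_comp (Equiv.addLeft (i + 1)),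
    Fin.sum_univ_castSucc, add_comm, ← Fin.sum_univ_eq_sum_range (fun k ↦ g (i + 1 + k))]
  simp only [Equiv.coe_addLeft, Fin.add_one_add_last, Fin.coe_eq_castSucc]

theorem sum_sdiff_pair_eq_sum_Ico_add_one_add (g : Fin (m + 2) → M) (i : Fin (m + 2)) :
    ∑ j ∈ univ \ {i, i + 1}, g j = ∑ k ∈ Ico 1 (m + 1), g (i + 1 + k) := by
  apply add_left_cancel (a := g (i + 1))
  have hpair : univ \ {i, i + 1} = (univ.erase i).erase (i + 1) := by
    ext j; simp only [mem_sdiff, mem_insert, mem_singleton, mem_erase, mem_univ]; tauto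
  rw [hpair, add_sum_erase _ _ (by simp), sum_erase_eq_sum_range_add_one_add,
    sum_range_eq_add_Ico _ m.succ_pos, Nat.cast_zero, add_zero]

end CyclicShift

theorem cycle_inequality {n : ℕ} (hn : 3 ≤ n) (f : Finset (Fin n) → ℝ)
    (hmono : ∀ S T : Finset (Fin n), S ⊆ T → f S ≤ f T)
    (hsub : ∀ S T : Finset (Fin n), f (S ∩ T) + f (S ∪ T) ≤ f S + f T)
    (i : Fin n) :
    f {i, i + ⟨1, by omega⟩} + ∑ j ∈ Finset.univ \ {i, i + ⟨1, by omega⟩}, f {j}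
      ≤ ∑ j ∈ Finset.univ \ {i}, f {j, j + ⟨1, by omega⟩} := by
  obtain ⟨m, rfl⟩ : ∃ m, n = m + 2 := ⟨n - 2, by omega⟩
  rw [Fin.mk_one, sum_sdiff_pair_eq_sum_Ico_add_one_add, sdiff_singleton_eq_erase,
    sum_erase_eq_sum_range_add_one_add]
  have hpath := pair_add_sum_singleton_le_sum_pair hmono hsub (fun k : ℕ ↦ i + 1 + k)
    (m := m + 1) (by omega)
  beta_reduce at hpath
  rw [Fin.natCast_eq_last, Fin.add_one_add_last, Nat.cast_zero, add_zero, pair_comm] at hpath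
  simpa [add_assoc] using hpath
end

section
/- Let (A_i)_{i∈ℤ} be a stationary discrete-time stochastic process with finite state space, so that H(A_j) = H(A_1) and I(A_j : A_{j+1}) = I(A_1 : A_2) for all j. Then for every n ≥ 2, I(A_1 : A_n) ≥ H(A_1) − (n−1)·H(A_2 | A_1), where I(X:Y) = H(X)+H(Y)−H(X,Y) and H(Y|X) = H(X,Y)−H(X). -/
/-- Shannon entropy (in bits) of the distribution of the random variable `X`
on a finite probability space with probability mass function `p`. -/
noncomputable def ent {Ω α : Type*} [Fintype Ω] [Fintype α] [DecidableEq α]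
    (p : Ω → ℝ) (X : Ω → α) : ℝ :=
  (∑ a : α, Real.negMulLog (∑ ω ∈ Finset.univ.filter (fun ω => X ω = a), p ω)) / Real.log 2

/-!
Conditioning on `Y = b` and applying subadditivity `H(X,Z) ≤ H(X) + H(Z)` to each restriction
`p · 1_{Y = b}` (subadditivity holds for unnormalized `p`, with a correction term for the total
mass) gives submodularity `H(Y,X,Z) + H(Y) ≤ H(Y,X) + H(Y,Z)`; together with
`H(X,Z) ≤ H(Y,X,Z)` this is the triangle inequality `H(X,Z) + H(Y) ≤ H(X,Y) + H(Y,Z)`.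
For `X, Y, Z = A₁, Aₖ, Aₖ₊₁` and a stationary process it reads
`H(A₁,Aₖ₊₁) ≤ H(A₁,Aₖ) + H(A₂ | A₁)`, so `H(A₁,Aₙ) ≤ H(A₁) + (n - 1) H(A₂ | A₁)`.
-/

open Finset Real

namespace Real

theorem negMulLog_sum_le {ι : Type*} (s : Finset ι) (f : ι → ℝ) (hf : ∀ i ∈ s, 0 ≤ f i) :
    negMulLog (∑ i ∈ s, f i) ≤ ∑ i ∈ s, negMulLog (f i) := by
  rw [negMulLog, neg_mul, sum_mul, ← sum_neg_distrib]
  refine sum_le_sum fun i hi => ?_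
  rcases (hf i hi).eq_or_lt with h | h
  · simp [← h]
  · rw [negMulLog, neg_mul, neg_le_neg_iff]
    exact mul_le_mul_of_nonneg_left (log_le_log h (single_le_sum hf hi)) (hf i hi)

-- `log t ≥ 1 - 1/t` at `t = x w / (u v)`, multiplied by `x`.
theorem self_sub_mul_div_le_mul_log {x u v w : ℝ} (hx : 0 ≤ x) (hu : x ≤ u) (hv : x ≤ v)
    (hw : x ≤ w) : x - u * v / w ≤ x * (log x + log w - log u - log v) := by
  rcases hx.eq_or_lt with rfl | hx
  · simpa using div_nonneg (mul_nonneg hu hv) hw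
  have hu := hx.trans_le hu
  have hv := hx.trans_le hv
  have hw := hx.trans_le hw
  calc x - u * v / w = x * (1 - (x * w / (u * v))⁻¹) := by field_simp
    _ ≤ x * log (x * w / (u * v)) :=
        mul_le_mul_of_nonneg_left (one_sub_inv_le_log_of_pos (by positivity)) hx.le
    _ = x * (log x + log w - log u - log v) := by
        rw [log_div (by positivity) (by positivity), log_mul hx.ne' hw.ne',
          log_mul hu.ne' hv.ne']
        ring

theorem sum_negMulLog_add_negMulLog_sum_le {α γ : Type*} [Fintype α] [Fintype γ]
    (q : α → γ → ℝ) (hq : ∀ a c, 0 ≤ q a c) :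
    ∑ a, ∑ c, negMulLog (q a c) + negMulLog (∑ a, ∑ c, q a c)
      ≤ ∑ a, negMulLog (∑ c, q a c) + ∑ c, negMulLog (∑ a, q a c) := by
  set u := fun a => ∑ c, q a c
  set v := fun c => ∑ a, q a c
  set T := ∑ a, ∑ c, q a c
  have hqu : ∀ a c, q a c ≤ u a := fun a c => single_le_sum (fun c _ => hq a c) (mem_univ c)
  have hqv : ∀ a c, q a c ≤ v c := fun a c => single_le_sum (fun a _ => hq a c) (mem_univ a)
  have hqT : ∀ a c, q a c ≤ T := fun a c =>
    (hqu a c).trans (single_le_sum (fun a _ => sum_nonneg fun c _ => hq a c) (mem_univ a))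
  have hvT : ∑ c, v c = T := sum_comm
  have hpoint : ∑ a, ∑ c, (q a c - u a * v c / T)
      ≤ ∑ a, ∑ c, q a c * (log (q a c) + log T - log (u a) - log (v c)) :=
    sum_le_sum fun a _ => sum_le_sum fun c _ =>
      self_sub_mul_div_le_mul_log (hq a c) (hqu a c) (hqv a c) (hqT a c)
  have hlhs : ∑ a, ∑ c, (q a c - u a * v c / T) = 0 := by
    calc _ = T - (∑ a, u a) * (∑ c, v c) / T := by
          simp only [sum_sub_distrib, sum_mul_sum, sum_div]; rfl
      _ = 0 := by rw [hvT, mul_self_div_self, sub_self]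
  have hrhs : ∑ a, ∑ c, q a c * (log (q a c) + log T - log (u a) - log (v c))
      = -∑ a, ∑ c, negMulLog (q a c) - negMulLog T
        + ∑ a, negMulLog (u a) + ∑ c, negMulLog (v c) := by
    have hT : ∑ a, ∑ c, q a c * log T = T * log T := by simp only [← sum_mul]; rfl
    have hU : ∑ a, ∑ c, q a c * log (u a) = ∑ a, u a * log (u a) := by simp only [← sum_mul]; rfl
    have hV : ∑ a, ∑ c, q a c * log (v c) = ∑ c, v c * log (v c) := by
      rw [sum_comm]; simp only [← sum_mul]; rfl
    simp only [mul_add, mul_sub, sum_add_distrib, sum_sub_distrib, hT, hU, hV, negMulLog,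
      neg_mul, sum_neg_distrib]
    ring
  linarith

end Real

section Entropy

variable {Ω α β γ : Type*} [Fintype Ω] [DecidableEq α] [DecidableEq β] [DecidableEq γ]
  {p : Ω → ℝ}

noncomputable def law (p : Ω → ℝ) (X : Ω → α) (a : α) : ℝ :=
  ∑ ω ∈ univ with X ω = a, p ω

theorem law_nonneg (hp : ∀ ω, 0 ≤ p ω) (X : Ω → α) (a : α) : 0 ≤ law p X a :=
  sum_nonneg fun ω _ => hp ω

theorem sum_law [Fintype α] (p : Ω → ℝ) (X : Ω → α) : ∑ a, law p X a = ∑ ω, p ω :=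
  sum_fiberwise _ _ _

theorem law_comp [Fintype α] (p : Ω → ℝ) (f : α → β) (X : Ω → α) (b : β) :
    law p (fun ω => f (X ω)) b = ∑ a ∈ univ with f a = b, law p X a := by
  unfold law
  rw [sum_fiberwise_eq_sum_filter]
  simp

theorem law_prod_fst [Fintype β] (p : Ω → ℝ) (X : Ω → α) (Y : Ω → β) (a : α) :
    ∑ b, law p (fun ω => (X ω, Y ω)) (a, b) = law p X a := by
  rw [law, ← sum_fiberwise (univ.filter fun ω => X ω = a) Y p]
  simp only [law, filter_filter, Prod.ext_iff]

theorem law_prod_snd [Fintype α] (p : Ω → ℝ) (X : Ω → α) (Y : Ω → β) (b : β) :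
    ∑ a, law p (fun ω => (X ω, Y ω)) (a, b) = law p Y b := by
  rw [law, ← sum_fiberwise (univ.filter fun ω => Y ω = b) X p]
  simp only [law, filter_filter, Prod.ext_iff, and_comm]

theorem law_indicator (p : Ω → ℝ) (X : Ω → α) (Y : Ω → β) (b : β) (a : α) :
    law ({ω | Y ω = b}.indicator p) X a = law p (fun ω => (Y ω, X ω)) (b, a) := by
  simp only [law, Set.indicator_apply, Set.mem_ofPred_eq, ← sum_filter, filter_filter,
    Prod.ext_iff, and_comm]

theorem sum_indicator_eq_law (p : Ω → ℝ) (Y : Ω → β) (b : β) :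
    ∑ ω, {ω | Y ω = b}.indicator p ω = law p Y b := by
  simp only [law, Set.indicator_apply, Set.mem_ofPred_eq, ← sum_filter]

variable [Fintype α] [Fintype β] [Fintype γ]

theorem ent_eq_sum_law (p : Ω → ℝ) (X : Ω → α) :
    ent p X = (∑ a, negMulLog (law p X a)) / log 2 := rfl

theorem ent_comp_le (hp : ∀ ω, 0 ≤ p ω) (f : α → β) (X : Ω → α) :
    ent p (fun ω => f (X ω)) ≤ ent p X := by
  rw [ent_eq_sum_law, ent_eq_sum_law]
  refine div_le_div_of_nonneg_right ?_ (log_nonneg one_le_two)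
  calc ∑ b, negMulLog (law p (fun ω => f (X ω)) b)
      ≤ ∑ b, ∑ a ∈ univ with f a = b, negMulLog (law p X a) := sum_le_sum fun b _ => by
        rw [law_comp]
        exact negMulLog_sum_le _ _ fun a _ => law_nonneg hp X a
    _ = ∑ a, negMulLog (law p X a) := sum_fiberwise _ _ _

theorem ent_comp_equiv (p : Ω → ℝ) (e : α ≃ β) (X : Ω → α) :
    ent p (fun ω => e (X ω)) = ent p X := by
  have hlaw : ∀ b, law p (fun ω => e (X ω)) b = law p X (e.symm b) := fun b => by
    simp only [law, ← e.eq_symm_apply]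
  rw [ent_eq_sum_law, ent_eq_sum_law, ← e.symm.sum_comp]
  simp only [hlaw]

theorem ent_prod_comm (p : Ω → ℝ) (X : Ω → α) (Y : Ω → β) :
    ent p (fun ω => (X ω, Y ω)) = ent p (fun ω => (Y ω, X ω)) :=
  (ent_comp_equiv p (Equiv.prodComm α β) _).symm

theorem ent_prod_add_le (hp : ∀ ω, 0 ≤ p ω) (X : Ω → α) (Y : Ω → β) :
    ent p (fun ω => (X ω, Y ω)) + negMulLog (∑ ω, p ω) / log 2 ≤ ent p X + ent p Y := by
  have h := sum_negMulLog_add_negMulLog_sum_le (fun a b => law p (fun ω => (X ω, Y ω)) (a, b))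
    fun a b => law_nonneg hp _ _
  simp only [law_prod_fst, law_prod_snd, ← Fintype.sum_prod_type', sum_law] at h
  rw [ent_eq_sum_law, ent_eq_sum_law, ent_eq_sum_law, ← add_div, ← add_div]
  exact div_le_div_of_nonneg_right h (log_nonneg one_le_two)

theorem ent_prod_eq_sum_ent_indicator (p : Ω → ℝ) (X : Ω → α) (Y : Ω → β) :
    ent p (fun ω => (Y ω, X ω)) = ∑ b, ent ({ω | Y ω = b}.indicator p) X := by
  simp only [ent_eq_sum_law, ← sum_div, law_indicator, Fintype.sum_prod_type]

theorem ent_submodular (hp : ∀ ω, 0 ≤ p ω) (X : Ω → α) (Y : Ω → β) (Z : Ω → γ) :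
    ent p (fun ω => (Y ω, (X ω, Z ω))) + ent p Y
      ≤ ent p (fun ω => (Y ω, X ω)) + ent p (fun ω => (Y ω, Z ω)) := by
  rw [ent_prod_eq_sum_ent_indicator, ent_prod_eq_sum_ent_indicator,
    ent_prod_eq_sum_ent_indicator, ent_eq_sum_law, sum_div]
  simp only [← sum_indicator_eq_law, ← sum_add_distrib]
  exact sum_le_sum fun b _ =>
    ent_prod_add_le (fun ω => Set.indicator_nonneg (fun ω _ => hp ω) ω) X Z

theorem ent_triangle (hp : ∀ ω, 0 ≤ p ω) (X : Ω → α) (Y : Ω → β) (Z : Ω → γ) :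
    ent p (fun ω => (X ω, Z ω)) + ent p Y
      ≤ ent p (fun ω => (X ω, Y ω)) + ent p (fun ω => (Y ω, Z ω)) := by
  have hmono : ent p (fun ω => (X ω, Z ω)) ≤ ent p (fun ω => (Y ω, (X ω, Z ω))) :=
    ent_comp_le hp Prod.snd (fun ω => (Y ω, (X ω, Z ω)))
  linarith [ent_submodular hp X Y Z, ent_prod_comm p X Y]

end Entropy

theorem ent_prod_le_of_stationary {Ω α : Type*} [Fintype Ω] [Fintype α] [DecidableEq α]
    {p : Ω → ℝ} (hp : ∀ ω, 0 ≤ p ω) (A : ℤ → Ω → α) {h P : ℝ}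
    (hH : ∀ j, ent p (A j) = h) (hP : ∀ j, ent p (fun ω => (A j ω, A (j + 1) ω)) = P)
    (i : ℤ) {m : ℕ} (hm : 1 ≤ m) :
    ent p (fun ω => (A i ω, A (i + m) ω)) ≤ h + m * (P - h) := by
  induction m, hm using Nat.le_induction with
  | base => simp [hP]
  | succ m _ ih =>
    have htri := ent_triangle hp (A i) (A (i + m)) (A (i + m + 1))
    rw [hH, hP] at htri
    push_cast
    rw [← add_assoc]
    linarith

theorem stationary_process_correlation_bound_general {Ω α : Type*} [Fintype Ω]
    [Fintype α] [DecidableEq α]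
    (p : Ω → ℝ) (hp : ∀ ω, 0 ≤ p ω)
    (A : ℤ → Ω → α)
    -- stationarity: H(A_j) = H(A_1) for all j
    (hH : ∀ j : ℤ, ent p (A j) = ent p (A 1))
    -- stationarity: I(A_j : A_{j+1}) = I(A_1 : A_2) for all j
    (hI : ∀ j : ℤ,
      ent p (A j) + ent p (A (j + 1)) - ent p (fun ω => (A j ω, A (j + 1) ω))
        = ent p (A 1) + ent p (A 2) - ent p (fun ω => (A 1 ω, A 2 ω)))
    (n : ℕ) (hn : 2 ≤ n) :
    ent p (A 1) + ent p (A n) - ent p (fun ω => (A 1 ω, A n ω))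
      ≥ ent p (A 1)
        - ((n : ℝ) - 1) * (ent p (fun ω => (A 1 ω, A 2 ω)) - ent p (A 1)) := by
  have hP : ∀ j, ent p (fun ω => (A j ω, A (j + 1) ω)) = ent p (fun ω => (A 1 ω, A 2 ω)) :=
    fun j => by linarith [hI j, hH j, hH (j + 1), hH 2]
  have hbound := ent_prod_le_of_stationary hp A hH hP 1 (m := n - 1) (by omega)
  have hidx : (1 : ℤ) + ((n - 1 : ℕ) : ℤ) = n := by omega
  rw [hidx, Nat.cast_sub (by omega), Nat.cast_one] at hbound
  linarith [hH n]

/-- Decay of correlations in a stationary stochastic process: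
`I(A₁ : Aₙ) ≥ H(A₁) - (n-1) · H(A₂ | A₁)`. -/
theorem stationary_process_correlation_bound {Ω α : Type*} [Fintype Ω]
    [Fintype α] [DecidableEq α]
    (p : Ω → ℝ) (hp : ∀ ω, 0 ≤ p ω) (hs : ∑ ω, p ω = 1)
    (A : ℤ → Ω → α)
    -- stationarity: H(A_j) = H(A_1) for all j
    (hH : ∀ j : ℤ, ent p (A j) = ent p (A 1))
    -- stationarity: I(A_j : A_{j+1}) = I(A_1 : A_2) for all j
    (hI : ∀ j : ℤ,
      ent p (A j) + ent p (A (j + 1)) - ent p (fun ω => (A j ω, A (j + 1) ω))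
        = ent p (A 1) + ent p (A 2) - ent p (fun ω => (A 1 ω, A 2 ω)))
    (n : ℕ) (hn : 2 ≤ n) :
    ent p (A 1) + ent p (A n) - ent p (fun ω => (A 1 ω, A n ω))
      ≥ ent p (A 1)
        - ((n : ℝ) - 1) * (ent p (fun ω => (A 1 ω, A 2 ω)) - ent p (A 1)) :=
  stationary_process_correlation_bound_general p hp A hH hI n hn
end

section
/- Let M ⊆ 2^{[n]} be a marginal scenario (a nonempty collection of subsets of [n] closed under taking subsets, containing ∅), and let f : M → ℝ satisfy f(∅) = 0 and the submodularity condition f(S∩T) + f(S∪T) ≤ f(S) + f(T) for all S, T ∈ M with S∪T ∈ M. Then there exists a submodular function g : 2^{[n]} → ℝ with g(∅)=0 and g(S) = f(S) for all S ∈ M. -/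
/-!
Extend `f` one set at a time, always adding a minimal set `U` outside the family, so that the
family stays downward closed. The only new submodularity constraints are
`f (S ⊓ T) + f U ≤ f S + f T` for `S ⊔ T = U`, which hold once `f U` is chosen below the
finitely many values `f S + f T - f (S ⊓ T)`.
-/

open Set Function

variable {α : Type*}

def SubmodularOn [Lattice α] (M : Set α) (f : α → ℝ) : Prop :=
  ∀ ⦃S T⦄, S ∈ M → T ∈ M → S ⊔ T ∈ M → f (S ⊓ T) + f (S ⊔ T) ≤ f S + f T

theorem IsLowerSet.insert_of_minimal [PartialOrder α] {M : Set α} {U : α} (hM : IsLowerSet M)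
    (hU : Minimal (· ∉ M) U) : IsLowerSet (insert U M) := by
  rintro a b hba (rfl | ha)
  · rcases hba.eq_or_lt with rfl | hlt
    · exact mem_insert _ _
    · exact mem_insert_of_mem _ (by_contra fun hb => hlt.not_ge (hU.2 hb hlt.le))
  · exact mem_insert_of_mem _ (hM hba ha)

namespace SubmodularOn

variable [Lattice α] [DecidableEq α]

/-- A constraint with `S = U` forces `T ≤ U` (as `M` is a lower set not containing `U`) and is
then trivial, so only those with `S ⊔ T = U` and `S, T ∈ M` bound the new value `v`. -/
theorem update_insert {M : Set α} {f : α → ℝ} {U : α} {v : ℝ} (hM : IsLowerSet M) (hU : U ∉ M)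
    (hf : SubmodularOn M f) (hv : ∀ S T, v ≤ f S + f T - f (S ⊓ T)) :
    SubmodularOn (insert U M) (update f U v) := by
  have hne : ∀ {S}, S ∈ M → S ≠ U := fun hS => hS.ne_of_notMem hU
  have of_eq_U : ∀ {S T}, S = U → S ⊔ T ∈ insert U M →
      update f U v (S ⊓ T) + update f U v (S ⊔ T) ≤ update f U v S + update f U v T := by
    rintro S T rfl (hST | hST)
    · rw [inf_eq_right.2 (left_eq_sup.1 hST.symm), hST, add_comm]
    · exact absurd (hM le_sup_left hST) hU
  intro S T hS hT hST
  rcases hS with rfl | hS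
  · exact of_eq_U rfl hST
  rcases hT with rfl | hT
  · rw [inf_comm, sup_comm, add_comm (update f _ _ S)]
    exact of_eq_U rfl (sup_comm S T ▸ hST)
  rw [update_of_ne (hne hS), update_of_ne (hne hT), update_of_ne (hne (hM inf_le_left hS))]
  rcases hST with hST | hST
  · rw [hST, update_self]
    linarith [hv S T]
  · rw [update_of_ne (hne hST)]
    exact hf hS hT hST

variable [Finite α]

theorem exists_extension_insert {M : Set α} {f : α → ℝ} {U : α} (hM : IsLowerSet M) (hU : U ∉ M)
    (hf : SubmodularOn M f) : ∃ g, SubmodularOn (insert U M) g ∧ EqOn g f M := by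
  obtain ⟨v, hv⟩ := (finite_range fun p : α × α => f p.1 + f p.2 - f (p.1 ⊓ p.2)).bddBelow
  refine ⟨update f U v, hf.update_insert hM hU fun S T => hv ⟨(S, T), rfl⟩, fun S hS => ?_⟩
  exact update_of_ne (hS.ne_of_notMem hU) _ _

theorem exists_extension {M : Set α} {f : α → ℝ} (hM : IsLowerSet M) (hf : SubmodularOn M f) :
    ∃ g, SubmodularOn univ g ∧ EqOn g f M := by
  rcases eq_or_ne M univ with rfl | hM_ne
  · exact ⟨f, hf, eqOn_refl _ _⟩
  obtain ⟨U, hU⟩ := exists_minimal_of_wellFoundedLT (· ∉ M) ((ne_univ_iff_exists_notMem M).1 hM_ne)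
  obtain ⟨g', hg', hg'f⟩ := hf.exists_extension_insert hM hU.1
  have : (insert U M)ᶜ.ncard < Mᶜ.ncard :=
    ncard_lt_ncard (compl_lt_compl_iff_lt.2 (ssubset_insert hU.1)) (toFinite _)
  obtain ⟨g, hg, hgg'⟩ := exists_extension (hM.insert_of_minimal hU) hg'
  exact ⟨g, hg, fun S hS => (hgg' (mem_insert_of_mem _ hS)).trans (hg'f hS)⟩
termination_by Mᶜ.ncard

end SubmodularOn

/-- Every partial submodular function on a marginal scenario (a downward-closed
family of subsets) extends to a full submodular function. -/
theorem partial_submodular_extends {n : ℕ} (M : Set (Finset (Fin n)))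
    (hempty : (∅ : Finset (Fin n)) ∈ M)
    (hdc : ∀ S T : Finset (Fin n), S ∈ M → T ⊆ S → T ∈ M)
    (f : Finset (Fin n) → ℝ) (h0 : f ∅ = 0)
    (hsub : ∀ S T : Finset (Fin n), S ∈ M → T ∈ M → S ∪ T ∈ M →
      f (S ∩ T) + f (S ∪ T) ≤ f S + f T) :
    ∃ g : Finset (Fin n) → ℝ, g ∅ = 0 ∧
      (∀ S T : Finset (Fin n), g (S ∩ T) + g (S ∪ T) ≤ g S + g T) ∧
      ∀ S ∈ M, g S = f S := by
  have hM : IsLowerSet M := fun S T hTS hS => hdc S T hS hTS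
  obtain ⟨g, hg, hgf⟩ := SubmodularOn.exists_extension hM fun S T => hsub S T
  exact ⟨g, (hgf hempty).trans h0, fun S T => hg (mem_univ S) (mem_univ T) (mem_univ _), hgf⟩
end

section
/- For any polymatroid f on [n] with n ≥ 4 and distinct indices 1,2,3,4 ∈ [n], the Braunstein–Caves inequality holds: f({1,4}) + f({2}) + f({3}) ≤ f({1,2}) + f({2,3}) + f({3,4}). -/
/-!
Submodularity applied to two sets `S`, `T`, followed by monotonicity on `S ∩ T`, gives
`f s + f (S ∪ T) ≤ f S + f T` for every `s ⊆ S ∩ T`. Gluing `{1, 2}` to `{2, 3}` along `{2}` and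
then `{1, 2, 3}` to `{3, 4}` along `{3}` bounds `f {2} + f {3} + f {1, 2, 3, 4}` by the right-hand
side, and `f {1, 4} ≤ f {1, 2, 3, 4}` by monotonicity.
-/

section

variable {α : Type*} [DecidableEq α] {f : Finset α → ℝ}

theorem add_union_le_of_subset_inter (hmono : ∀ S T : Finset α, S ⊆ T → f S ≤ f T)
    (hsub : ∀ S T : Finset α, f (S ∩ T) + f (S ∪ T) ≤ f S + f T) {s S T : Finset α}
    (hs : s ⊆ S ∩ T) : f s + f (S ∪ T) ≤ f S + f T :=
  (add_le_add_left (hmono s (S ∩ T) hs) _).trans (hsub S T)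

end

theorem braunstein_caves_general {n : ℕ} (f : Finset (Fin n) → ℝ)
    (hmono : ∀ S T : Finset (Fin n), S ⊆ T → f S ≤ f T)
    (hsub : ∀ S T : Finset (Fin n), f (S ∩ T) + f (S ∪ T) ≤ f S + f T)
    (i1 i2 i3 i4 : Fin n) :
    f {i1, i4} + f {i2} + f {i3} ≤ f {i1, i2} + f {i2, i3} + f {i3, i4} := by
  have glue₂ : f {i2} + f ({i1, i2} ∪ {i2, i3}) ≤ f {i1, i2} + f {i2, i3} :=
    add_union_le_of_subset_inter hmono hsub (by simp)
  have glue₃ : f {i3} + f ({i1, i2} ∪ {i2, i3} ∪ {i3, i4}) ≤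
      f ({i1, i2} ∪ {i2, i3}) + f {i3, i4} :=
    add_union_le_of_subset_inter hmono hsub (by simp)
  have cover : f {i1, i4} ≤ f ({i1, i2} ∪ {i2, i3} ∪ {i3, i4}) :=
    hmono _ _ (by simp [Finset.insert_subset_iff])
  linarith

/-- The Braunstein–Caves inequality for polymatroids. -/
theorem braunstein_caves {n : ℕ} (hn : 4 ≤ n) (f : Finset (Fin n) → ℝ)
    (h0 : f ∅ = 0) (hnn : ∀ S, 0 ≤ f S)
    (hmono : ∀ S T : Finset (Fin n), S ⊆ T → f S ≤ f T)
    (hsub : ∀ S T : Finset (Fin n), f (S ∩ T) + f (S ∪ T) ≤ f S + f T)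
    (i1 i2 i3 i4 : Fin n) (h12 : i1 ≠ i2) (h13 : i1 ≠ i3) (h14 : i1 ≠ i4)
    (h23 : i2 ≠ i3) (h24 : i2 ≠ i4) (h34 : i3 ≠ i4) :
    f {i1, i4} + f {i2} + f {i3} ≤ f {i1, i2} + f {i2, i3} + f {i3, i4} :=
  braunstein_caves_general f hmono hsub i1 i2 i3 i4
end
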